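/- arXiv:2003.02187 — 2 statements merged into one kernel-verified Lean document; each statement's English description precedes it below -/
import Mathlib

section
/- Let τ ≥ 2 and a₁,…,a_τ be positive integers each at most τ. Let F̄ = (Ḡ | H̄) be the τ × 2τ matrix where Ḡ = diag(a₁,…,a_τ) and H̄ is the bidiagonal matrix with −1 on the diagonal and 1 on the subdiagonal. Then every element of the Graver basis of F̄ has ℓ₁-norm at most C·τ⁵ for some absolute constant C. -/
/-- `g` is conformal to `h`: same orthant and componentwise smaller. -/
def ConformalTo {n : Type*} (g h : n → ℤ) : Prop :=
  ∀ i, 0 ≤ g i * h i ∧ |g i| ≤ |h i|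

/-- `g` is an element of the Graver basis of `A`. -/
def InGraver {m n : Type*} [Fintype m] [Fintype n] (A : Matrix m n ℤ) (g : n → ℤ) : Prop :=
  g ≠ 0 ∧ A.mulVec g = 0 ∧
    ∀ g' : n → ℤ, g' ≠ 0 → A.mulVec g' = 0 → ConformalTo g' g → g' = g

/-!
A kernel vector `(x, z)` of `F̄` is determined by `x`: `z` is the walk `z_k = ∑_{i ≤ k} a_i x_i`.
Suppose a Graver element has `z_M > 2τ³`. On its way up the walk makes a step `a_p x_p ≥ τ²`,
so `x_p ≥ τ`, after which it stays above `τ²` up to `M`. If it stays above `τ²` to the end, then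
`e_p` (whose walk is `a_p ≤ τ` after `p`) is a conformal kernel vector; if it comes back below `τ²`,
it makes a step `a_q x_q ≤ -τ²`, and the cycle `a_q e_p - a_p e_q`, whose walk is `a_p a_q ≤ τ²`
on `(p, q]` and `0` elsewhere, is one. Either contradicts minimality, as both differ from `g` at
`z_M`. Hence `|z_k| ≤ 2τ³`, `|x_k| ≤ |z_k| + |z_{k-1}| ≤ 4τ³`, and the ℓ₁-norm is at most `8τ⁴`.
-/

open Finset Matrix

theorem conformalTo_of_forall {n : Type*} {u v : n → ℤ}
    (h : ∀ i, u i = 0 ∨ 0 ≤ u i ∧ u i ≤ v i ∨ v i ≤ u i ∧ u i ≤ 0) : ConformalTo u v := by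
  intro i
  rcases h i with h0 | ⟨h0, h1⟩ | ⟨h0, h1⟩
  · simp [h0]
  · exact ⟨by nlinarith, abs_le_abs_of_nonneg h0 h1⟩
  · exact ⟨by nlinarith, abs_le_abs_of_nonpos h1 h0⟩

theorem ConformalTo.neg {n : Type*} {u v : n → ℤ} (h : ConformalTo u v) :
    ConformalTo (-u) (-v) := fun i => by
  simpa only [Pi.neg_apply, neg_mul_neg, abs_neg] using h i

theorem InGraver.neg {m n : Type*} [Fintype m] [Fintype n] {A : Matrix m n ℤ} {g : n → ℤ}
    (hg : InGraver A g) : InGraver A (-g) := by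
  obtain ⟨hne, hker, hmin⟩ := hg
  refine ⟨neg_ne_zero.mpr hne, by rw [mulVec_neg, hker, neg_zero],
    fun g' hne' hker' hconf => ?_⟩
  have := hmin (-g') (neg_ne_zero.mpr hne') (by rw [mulVec_neg, hker', neg_zero])
    (by simpa only [neg_neg] using hconf.neg)
  rw [← this, neg_neg]

theorem exists_le_succ_sub_of_mul_lt_sub (f : ℕ → ℤ) {a b n : ℕ} {T : ℤ} (hab : a ≤ b) (hn : b - a ≤ n)
    (hT : 1 ≤ T) (h : n * (T - 1) < f b - f a) : ∃ i ∈ Ico a b, T ≤ f (i + 1) - f i := by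
  have hsum : ∑ _i ∈ Ico a b, (T - 1) < ∑ i ∈ Ico a b, (f (i + 1) - f i) := by
    rw [sum_Ico_sub f hab, sum_const, Nat.card_Ico, nsmul_eq_mul]
    have : ((b - a : ℕ) : ℤ) ≤ n := by exact_mod_cast hn
    nlinarith
  obtain ⟨i, hi, hlt⟩ := exists_lt_of_sum_lt hsum
  exact ⟨i, hi, by omega⟩

theorem exists_up_crossing (f : ℕ → ℤ) {M n : ℕ} {T : ℤ} (hMn : M ≤ n) (hT : 1 ≤ T)
    (h0 : f 0 < T) (hM : n * (T - 1) + T ≤ f M) :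
    ∃ p < M, T ≤ f (p + 1) - f p ∧ ∀ k, p < k → k ≤ M → T ≤ f k := by
  classical
  set r := Nat.findGreatest (fun k => f k < T) M
  have hr : f r < T := Nat.findGreatest_spec (P := fun k => f k < T) (Nat.zero_le M) h0
  have habove : ∀ k, r < k → k ≤ M → T ≤ f k := fun k hrk hkM =>
    not_lt.mp (Nat.findGreatest_is_greatest hrk hkM)
  have hrM : r < M := lt_of_le_of_ne (Nat.findGreatest_le M) fun h => by
    rw [h] at hr; have : 0 ≤ (n : ℤ) * (T - 1) := by positivity
    linarith
  obtain ⟨p, hp, hstep⟩ := exists_le_succ_sub_of_mul_lt_sub f (n := n) hrM.le (by omega) hT (by linarith)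
  rw [mem_Ico] at hp
  exact ⟨p, hp.2, hstep, fun k hpk hkM => habove k (by omega) hkM⟩

theorem exists_down_crossing (f : ℕ → ℤ) {M b n : ℕ} {T : ℤ} (hMb : M < b) (hbn : b - M ≤ n)
    (hT : 1 ≤ T) (hM : n * (T - 1) + T ≤ f M) (hb : f b < T) :
    ∃ q, M ≤ q ∧ q < b ∧ f (q + 1) - f q ≤ -T ∧ ∀ k, M ≤ k → k ≤ q → T ≤ f k := by
  classical
  have hex : ∃ k, M < k ∧ f k < T := ⟨b, hMb, hb⟩
  set c := Nat.find hex
  obtain ⟨hMc, hc⟩ : M < c ∧ f c < T := Nat.find_spec hex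
  have hcb : c ≤ b := Nat.find_min' hex ⟨hMb, hb⟩
  have hbelow : ∀ k, M ≤ k → k < c → T ≤ f k := fun k hMk hkc => by
    rcases hMk.eq_or_lt with rfl | hMk
    · have : 0 ≤ (n : ℤ) * (T - 1) := by positivity
      linarith
    · exact not_lt.mp fun hk => Nat.find_min hex hkc ⟨hMk, hk⟩
  obtain ⟨q, hq, hstep⟩ := exists_le_succ_sub_of_mul_lt_sub (fun k => -f k) (n := n) hMc.le (by omega) hT
    (by linarith)
  rw [mem_Ico] at hq
  exact ⟨q, hq.1, by omega, by linarith,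
    fun k hMk hkq => hbelow k hMk (by omega)⟩

/-- `walk A x n` is the paper's `z_n`, the indices of `a` and `x` being shifted to start at `0`;
`pathVec` stores `z_{k+1}` at `Sum.inr k`. -/
def walk (A x : ℕ → ℤ) (n : ℕ) : ℤ := ∑ i ∈ range n, A i * x i

def pathVec (τ : ℕ) (A x : ℕ → ℤ) : Fin τ ⊕ Fin τ → ℤ :=
  Sum.elim (fun k => x k) (fun k => walk A x (k + 1))

section walk

variable {A x y : ℕ → ℤ}

@[simp] theorem walk_zero : walk A x 0 = 0 := sum_range_zero _

theorem walk_succ (n : ℕ) : walk A x (n + 1) = walk A x n + A n * x n := sum_range_succ _ _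

theorem walk_neg (n : ℕ) : walk A (-x) n = -walk A x n := by
  simp only [walk, Pi.neg_apply, mul_neg, sum_neg_distrib]

theorem walk_sub (n : ℕ) : walk A (x - y) n = walk A x n - walk A y n := by
  simp only [walk, Pi.sub_apply, mul_sub, sum_sub_distrib]

theorem walk_single (p : ℕ) (c : ℤ) (n : ℕ) :
    walk A (Pi.single p c) n = if p < n then A p * c else 0 := by
  simp only [walk, Pi.single_apply, mul_ite, mul_zero, sum_ite_eq', mem_range]

theorem pathVec_neg (τ : ℕ) : pathVec τ A (-x) = -pathVec τ A x := by
  ext (k | k) <;> simp [pathVec, walk_neg]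

end walk

section matrix

variable {τ : ℕ} {a : Fin τ → ℤ} {F : Matrix (Fin τ) (Fin τ ⊕ Fin τ) ℤ}

theorem mulVec_apply_of_blocks (hG : ∀ k ℓ, F k (Sum.inl ℓ) = if k = ℓ then a k else 0)
    (hH : ∀ k ℓ, F k (Sum.inr ℓ) =
      if k = ℓ then -1 else if (k : ℕ) = (ℓ : ℕ) + 1 then 1 else 0)
    (v : Fin τ ⊕ Fin τ → ℤ) (k : Fin τ) :
    (F *ᵥ v) k = a k * v (Sum.inl k) - v (Sum.inr k) +
      ∑ ℓ : Fin τ, if (k : ℕ) = ℓ + 1 then v (Sum.inr ℓ) else 0 := by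
  have hsub : ∀ ℓ : Fin τ, F k (Sum.inr ℓ) * v (Sum.inr ℓ) =
      (if k = ℓ then -v (Sum.inr ℓ) else 0) +
        if (k : ℕ) = ℓ + 1 then v (Sum.inr ℓ) else 0 := fun ℓ => by
    rw [hH]
    split_ifs with h1 h2 <;> first | (subst h1; exfalso; omega) | ring
  simp only [mulVec, dotProduct, Fintype.sum_sum_type, hG, hsub, ite_mul, zero_mul,
    sum_add_distrib, sum_ite_eq, mem_univ, if_true]
  ring

theorem sum_ite_val_eq_succ (k : Fin τ) (f : ℕ → ℤ) (hf : f 0 = 0) :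
    ∑ ℓ : Fin τ, (if (k : ℕ) = ℓ + 1 then f (ℓ + 1) else 0) = f k := by
  rw [Fin.sum_univ_eq_sum_range (fun i => if (k : ℕ) = i + 1 then f (i + 1) else 0)]
  obtain ⟨_ | j, hk⟩ := k
  · simp [hf]
  · simp only [Nat.add_right_cancel_iff, sum_ite_eq, mem_range, if_pos (Nat.lt_of_succ_lt hk)]

variable (hG : ∀ k ℓ, F k (Sum.inl ℓ) = if k = ℓ then a k else 0)
    (hH : ∀ k ℓ, F k (Sum.inr ℓ) =
      if k = ℓ then -1 else if (k : ℕ) = (ℓ : ℕ) + 1 then 1 else 0)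
include hG hH

theorem mulVec_pathVec {A : ℕ → ℤ} (hAa : ∀ k : Fin τ, A k = a k) (x : ℕ → ℤ) :
    F *ᵥ pathVec τ A x = 0 := by
  funext k
  rw [mulVec_apply_of_blocks hG hH]
  simp only [pathVec, Sum.elim_inl, Sum.elim_inr]
  rw [sum_ite_val_eq_succ k (walk A x) walk_zero, walk_succ, hAa, Pi.zero_apply]
  ring

theorem eq_pathVec_of_mulVec_eq_zero {A : ℕ → ℤ} (hAa : ∀ k : Fin τ, A k = a k)
    {g : Fin τ ⊕ Fin τ → ℤ} (hg : F *ᵥ g = 0) {x : ℕ → ℤ} (hx : ∀ k : Fin τ, x k = g (Sum.inl k)) :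
    g = pathVec τ A x := by
  have hz : ∀ n (hn : n < τ), g (Sum.inr ⟨n, hn⟩) = walk A x (n + 1) := by
    intro n
    induction n using Nat.strong_induction_on with
    | _ n ih =>
      intro hn
      have hrow := congrFun hg ⟨n, hn⟩
      have hprev : ∑ ℓ : Fin τ, (if n = ℓ + 1 then g (Sum.inr ℓ) else 0) = walk A x n := by
        rw [← sum_ite_val_eq_succ ⟨n, hn⟩ (walk A x) walk_zero]
        refine sum_congr rfl fun ℓ _ => ?_
        split_ifs with h
        · exact ih ℓ (by omega) ℓ.isLt
        · rfl
      rw [mulVec_apply_of_blocks hG hH, Pi.zero_apply, hprev, ← hx, ← hAa] at hrow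
      rw [walk_succ]
      linarith
  ext (k | k)
  · exact (hx k).symm
  · exact hz k k.isLt

end matrix

section witnesses

variable {τ : ℕ} {A x : ℕ → ℤ}

theorem conformalTo_pathVec_single {p : ℕ} (hAp : 0 ≤ A p) (hxp : 1 ≤ x p)
    (hz : ∀ n, p < n → n ≤ τ → A p ≤ walk A x n) :
    ConformalTo (pathVec τ A (Pi.single p 1)) (pathVec τ A x) := by
  refine conformalTo_of_forall fun i => ?_
  rcases i with k | k
  · simp only [pathVec, Sum.elim_inl, Pi.single_apply]
    split_ifs with h
    · exact Or.inr (Or.inl ⟨zero_le_one, h ▸ hxp⟩)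
    · exact Or.inl rfl
  · simp only [pathVec, Sum.elim_inr, walk_single, mul_one]
    split_ifs with h
    · exact Or.inr (Or.inl ⟨hAp, hz _ h k.isLt⟩)
    · exact Or.inl rfl

theorem conformalTo_pathVec_cycle {p q : ℕ} (hpq : p < q) (hAp : 0 ≤ A p) (hAq : 0 ≤ A q)
    (hxp : A q ≤ x p) (hxq : x q ≤ -A p)
    (hz : ∀ n, p < n → n ≤ q → A p * A q ≤ walk A x n) :
    ConformalTo (pathVec τ A (Pi.single p (A q) - Pi.single q (A p))) (pathVec τ A x) := by
  refine conformalTo_of_forall fun i => ?_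
  rcases i with k | k
  · simp only [pathVec, Sum.elim_inl, Pi.sub_apply, Pi.single_apply]
    split_ifs with hp hq hq
    · omega
    · exact Or.inr (Or.inl ⟨by linarith, hp ▸ by linarith⟩)
    · exact Or.inr (Or.inr ⟨hq ▸ by linarith, by linarith⟩)
    · exact Or.inl (sub_zero 0)
  · simp only [pathVec, Sum.elim_inr, walk_sub, walk_single]
    split_ifs with hp hq hq
    · exact Or.inl (by ring)
    · exact Or.inr (Or.inl ⟨by simpa using mul_nonneg hAp hAq, by simpa using hz _ hp (by omega)⟩)
    · omega
    · exact Or.inl (sub_zero 0)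

end witnesses

section bound

variable {τ : ℕ} {A x : ℕ → ℤ}

theorem le_of_sq_le_mul {t a y : ℤ} (ha : 1 ≤ a) (hat : a ≤ t) (h : t ^ 2 ≤ a * y) : t ≤ y := by
  nlinarith

theorem exists_conformalTo_pathVec_walk_le (hA : ∀ i < τ, 1 ≤ A i ∧ A i ≤ τ) {n : ℕ}
    (hn : n ≤ τ) (hτ : 1 ≤ τ) (hfar : τ * (τ ^ 2 - 1) + τ ^ 2 ≤ walk A x n) :
    ∃ y : ℕ → ℤ, (∃ p < τ, y p ≠ 0) ∧ ConformalTo (pathVec τ A y) (pathVec τ A x) ∧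
      walk A y n ≤ τ ^ 2 := by
  have hT : (1 : ℤ) ≤ τ ^ 2 := one_le_pow₀ (by exact_mod_cast hτ)
  obtain ⟨p, hpn, hstep_p, habove⟩ :=
    exists_up_crossing (walk A x) hn hT (by rw [walk_zero]; linarith) hfar
  obtain ⟨hAp1, hApτ⟩ := hA p (by omega)
  have hxp : (τ : ℤ) ≤ x p :=
    le_of_sq_le_mul hAp1 hApτ (by rwa [walk_succ, add_sub_cancel_left] at hstep_p)
  by_cases hreturn : ∃ b, n < b ∧ b ≤ τ ∧ walk A x b < τ ^ 2
  · obtain ⟨b, hnb, hbτ, hb⟩ := hreturn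
    obtain ⟨q, hnq, hqb, hstep_q, hbelow⟩ :=
      exists_down_crossing (walk A x) hnb (by omega) hT hfar hb
    obtain ⟨hAq1, hAqτ⟩ := hA q (by omega)
    have hxq : (τ : ℤ) ≤ -x q := le_of_sq_le_mul hAq1 hAqτ
      (by rw [walk_succ, add_sub_cancel_left] at hstep_q; linarith)
    have hApq : A p * A q ≤ τ ^ 2 := by
      rw [sq]; exact mul_le_mul hApτ hAqτ (by omega) (by omega)
    refine ⟨Pi.single p (A q) - Pi.single q (A p), ⟨p, by omega, ?_⟩,
      conformalTo_pathVec_cycle (by omega) (by omega) (by omega) (by omega) (by omega)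
        fun k hpk hkq => hApq.trans ?_, ?_⟩
    · simp only [Pi.sub_apply, Pi.single_eq_same, Pi.single_eq_of_ne (by omega : p ≠ q)]
      omega
    · rcases le_or_gt k n with hkn | hnk
      · exact habove k hpk hkn
      · exact hbelow k hnk.le hkq
    · simpa [walk_sub, walk_single, hpn, not_lt.2 hnq] using hApq
  · push Not at hreturn
    have hApT : A p ≤ τ ^ 2 := hApτ.trans (by nlinarith)
    refine ⟨Pi.single p 1, ⟨p, by omega, by simp⟩,
      conformalTo_pathVec_single (by omega) (by omega) fun k hpk hkτ => hApT.trans ?_, ?_⟩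
    · rcases le_or_gt k n with hkn | hnk
      · exact habove k hpk hkn
      · exact hreturn k hnk hkτ
    · simpa [walk_single, hpn] using hApT

variable {m : Type*} [Fintype m] {F : Matrix m (Fin τ ⊕ Fin τ) ℤ}

theorem walk_le_of_inGraver (hA : ∀ i < τ, 1 ≤ A i ∧ A i ≤ τ)
    (hF : ∀ y, F *ᵥ pathVec τ A y = 0) (hx : InGraver F (pathVec τ A x)) {n : ℕ} (hn : n ≤ τ) :
    walk A x n ≤ 2 * τ ^ 3 := by
  by_contra! hbig
  obtain ⟨k, rfl⟩ : ∃ k, n = k + 1 := Nat.exists_eq_add_one_of_ne_zero fun h => by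
    rw [h, walk_zero] at hbig
    have : (0 : ℤ) ≤ 2 * τ ^ 3 := by positivity
    linarith
  have hτ : (1 : ℤ) ≤ τ := by exact_mod_cast (by omega : 1 ≤ τ)
  obtain ⟨y, ⟨p, hp, hyp⟩, hconf, hyn⟩ :=
    exists_conformalTo_pathVec_walk_le hA hn (by omega) (by nlinarith)
  have hne : pathVec τ A y ≠ 0 := fun h => hyp (by simpa [pathVec] using congrFun h (.inl ⟨p, hp⟩))
  have hwalk : walk A y (k + 1) = walk A x (k + 1) := by
    simpa [pathVec] using congrFun (hx.2.2 _ hne (hF y) hconf) (.inr ⟨k, by omega⟩)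
  nlinarith

theorem abs_pathVec_le_of_inGraver (hA : ∀ i < τ, 1 ≤ A i ∧ A i ≤ τ)
    (hF : ∀ y, F *ᵥ pathVec τ A y = 0) (hx : InGraver F (pathVec τ A x)) (i : Fin τ ⊕ Fin τ) :
    |pathVec τ A x i| ≤ 4 * τ ^ 3 := by
  have hwalk : ∀ n ≤ τ, |walk A x n| ≤ 2 * τ ^ 3 := fun n hn => by
    have hneg := walk_le_of_inGraver hA hF (pathVec_neg (x := x) τ ▸ hx.neg) hn
    rw [walk_neg] at hneg
    exact abs_le.2 ⟨by linarith, walk_le_of_inGraver hA hF hx hn⟩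
  rcases i with k | k
  · have hAk := (hA k k.isLt).1
    calc |x k| ≤ |A k * x k| := by
          rw [abs_mul]; exact le_mul_of_one_le_left (abs_nonneg _) (by rwa [abs_of_pos (by omega)])
      _ = |walk A x (k + 1) - walk A x k| := by rw [walk_succ, add_sub_cancel_left]
      _ ≤ |walk A x (k + 1)| + |walk A x k| := abs_sub _ _
      _ ≤ 4 * τ ^ 3 := by linarith [hwalk (k + 1) k.isLt, hwalk k k.isLt.le]
  · have : (0 : ℤ) ≤ τ ^ 3 := by positivity
    exact (hwalk (k + 1) k.isLt).trans (by linarith)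

end bound

/-- There is an absolute constant `C` such that every Graver basis element of
`F̄ = (diag(a) | H̄)` has ℓ₁-norm at most `C τ⁵`. -/
theorem stmt1 : ∃ C : ℕ, ∀ (τ : ℕ), 2 ≤ τ → ∀ (a : Fin τ → ℤ),
    (∀ k, 1 ≤ a k ∧ a k ≤ (τ : ℤ)) →
    ∀ (F : Matrix (Fin τ) (Fin τ ⊕ Fin τ) ℤ),
    (∀ k ℓ, F k (Sum.inl ℓ) = if k = ℓ then a k else 0) →
    (∀ k ℓ, F k (Sum.inr ℓ) =
      if k = ℓ then -1 else if (k : ℕ) = (ℓ : ℕ) + 1 then 1 else 0) →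
    ∀ g : Fin τ ⊕ Fin τ → ℤ, InGraver F g →
    (∑ i, |g i|) ≤ (C : ℤ) * (τ : ℤ) ^ 5 := by
  refine ⟨4, fun τ hτ a ha F hG hH g hg => ?_⟩
  set A := Function.extend Fin.val a 0
  have hAa : ∀ k : Fin τ, A k = a k := Fin.val_injective.extend_apply a 0
  have hA : ∀ i < τ, 1 ≤ A i ∧ A i ≤ τ := fun i hi => hAa ⟨i, hi⟩ ▸ ha ⟨i, hi⟩
  have hgx := eq_pathVec_of_mulVec_eq_zero hG hH hAa hg.2.1
    (Fin.val_injective.extend_apply (g ∘ Sum.inl) 0)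
  rw [hgx] at hg ⊢
  calc ∑ i, |pathVec τ A _ i| ≤ ∑ _i : Fin τ ⊕ Fin τ, 4 * (τ : ℤ) ^ 3 :=
        sum_le_sum fun i _ => abs_pathVec_le_of_inGraver hA (mulVec_pathVec hG hH hAa) hg i
    _ = 2 * τ * (4 * τ ^ 3) := by
        rw [sum_const, card_univ, Fintype.card_sum, Fintype.card_fin, nsmul_eq_mul]; push_cast; ring
    _ ≤ 4 * τ ^ 5 := by
        have : (2 : ℤ) ≤ τ := by exact_mod_cast hτ
        nlinarith [pow_pos (by omega : (0 : ℤ) < τ) 4]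
end

section
/- Let X ⊆ ℤ^d be a finite set with M = max_{x∈X} ‖x‖_∞, and let b ∈ cone_ℕ(X). Then there exists X̃ ⊆ X with b ∈ cone_ℕ(X̃) and |X̃| ≤ 2d·log₂(4dM). -/
/-!
Take a subset `Y ⊆ X` of minimal size with `b ∈ cone_ℕ(Y)`. If two distinct subsets of `Y` had
the same sum, then so would two disjoint ones `S ≠ T`, and shifting coefficients from `S` to `T`
would remove an element of `Y` from a representation of `b`. Hence the `2^|Y|` subset sums of `Y`
are distinct; they lie in the box `[-|Y|M, |Y|M]^d`, so `2^|Y| ≤ (2|Y|M + 1)^d`, which forces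
`|Y| ≤ 2d log₂(4dM)`.
-/

open Finset

def natCone {V : Type*} [AddCommMonoid V] (X : Finset V) : Set V :=
  {b | ∃ μ : V → ℕ, b = ∑ x ∈ X, μ x • x}

section natCone

variable {V : Type*} [DecidableEq V]

theorem sum_add_ite_mem_smul [AddCommMonoid V] (X U : Finset V) (hU : U ⊆ X) (f : V → ℕ)
    (c : ℕ) :
    ∑ x ∈ X, (f x + if x ∈ U then c else 0) • x = ∑ x ∈ X, f x • x + c • ∑ x ∈ U, x := by
  simp only [add_smul, ite_smul, zero_smul, sum_add_distrib, sum_ite_mem, inter_eq_right.mpr hU,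
    smul_sum]

theorem exists_mem_natCone_erase_of_sum_eq [AddCancelCommMonoid V] {X S T : Finset V} {b : V}
    (hb : b ∈ natCone X) (hSX : S ⊆ X) (hTX : T ⊆ X) (hST : Disjoint S T) (hS : S.Nonempty)
    (hsum : ∑ x ∈ S, x = ∑ x ∈ T, x) : ∃ x₀ ∈ S, b ∈ natCone (X.erase x₀) := by
  obtain ⟨μ, rfl⟩ := hb
  obtain ⟨x₀, hx₀S, hx₀min⟩ := S.exists_min_image μ hS
  -- Trade `μ x₀` copies of `∑ S` for as many copies of `∑ T`; this kills the coefficient of `x₀`.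
  set ν : V → ℕ := fun x => if x ∈ S then μ x - μ x₀ else if x ∈ T then μ x + μ x₀ else μ x
  have hν : ∀ x, ν x + (if x ∈ S then μ x₀ else 0) = μ x + (if x ∈ T then μ x₀ else 0) := by
    intro x
    by_cases hxS : x ∈ S
    · simp [ν, hxS, disjoint_left.mp hST hxS, Nat.sub_add_cancel (hx₀min x hxS)]
    · by_cases hxT : x ∈ T <;> simp [ν, hxS, hxT]
  have hνsum : ∑ x ∈ X, ν x • x = ∑ x ∈ X, μ x • x := by
    apply add_right_cancel (b := μ x₀ • ∑ x ∈ S, x)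
    rw [← sum_add_ite_mem_smul X S hSX, hsum, ← sum_add_ite_mem_smul X T hTX]
    simp only [hν]
  refine ⟨x₀, hx₀S, ν, ?_⟩
  rw [sum_erase _ (by simp [ν, hx₀S]), hνsum]

theorem addDissociated_of_forall_notMem_natCone_erase [AddCommGroup V] {Y : Finset V} {b : V}
    (hb : b ∈ natCone Y) (hmin : ∀ x ∈ Y, b ∉ natCone (Y.erase x)) :
    AddDissociated (Y : Set V) := by
  by_contra hY
  obtain ⟨S, T, hSY, hTY, hST, hne, hsum⟩ := not_addDissociated_iff_exists_disjoint.mp hY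
  rw [coe_subset] at hSY hTY
  rcases S.eq_empty_or_nonempty with rfl | hS
  · obtain ⟨x, hxT, hx⟩ := exists_mem_natCone_erase_of_sum_eq hb hTY hSY hST.symm
      (nonempty_iff_ne_empty.mpr (Ne.symm hne)) hsum.symm
    exact hmin x (hTY hxT) hx
  · obtain ⟨x, hxS, hx⟩ := exists_mem_natCone_erase_of_sum_eq hb hSY hTY hST hS hsum
    exact hmin x (hSY hxS) hx

theorem exists_minimal_subset_mem_natCone [AddCommMonoid V] {X : Finset V} {b : V}
    (hb : b ∈ natCone X) :
    ∃ Y ⊆ X, b ∈ natCone Y ∧ ∀ x ∈ Y, b ∉ natCone (Y.erase x) := by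
  classical
  obtain ⟨Y, hY, hYmin⟩ := (X.powerset.filter (b ∈ natCone ·)).exists_min_image card
    ⟨X, by simpa using hb⟩
  rw [mem_filter, mem_powerset] at hY
  refine ⟨Y, hY.1, hY.2, fun x hx hbx => ?_⟩
  have hcard := hYmin (Y.erase x) (by simpa using ⟨(erase_subset x Y).trans hY.1, hbx⟩)
  exact (card_erase_lt_of_mem hx).not_ge hcard

end natCone

theorem abs_sum_apply_le {ι : Type*} {S : Finset (ι → ℤ)} {M : ℕ}
    (hM : ∀ x ∈ S, ∀ i, |x i| ≤ (M : ℤ)) (i : ι) : |(∑ x ∈ S, x) i| ≤ #S * M := by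
  rw [Finset.sum_apply]
  calc |∑ x ∈ S, x i| ≤ ∑ x ∈ S, |x i| := abs_sum_le_sum_abs _ _
    _ ≤ ∑ _x ∈ S, (M : ℤ) := sum_le_sum fun x hx => hM x hx i
    _ = #S * M := by rw [sum_const, nsmul_eq_mul]

theorem AddDissociated.two_pow_card_le {ι : Type*} [Fintype ι] [DecidableEq ι]
    {Y : Finset (ι → ℤ)} {M : ℕ} (hY : AddDissociated (Y : Set (ι → ℤ)))
    (hM : ∀ x ∈ Y, ∀ i, |x i| ≤ (M : ℤ)) :
    2 ^ #Y ≤ (2 * #Y * M + 1) ^ Fintype.card ι := by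
  set r : ℤ := #Y * M
  have hbox : ∀ S ∈ Y.powerset, ∑ x ∈ S, x ∈ Fintype.piFinset fun _ : ι => Icc (-r) r := by
    intro S hS
    rw [mem_powerset] at hS
    simp only [Fintype.mem_piFinset, mem_Icc, ← abs_le]
    intro i
    refine (abs_sum_apply_le (fun x hx => hM x (hS hx)) i).trans ?_
    exact mul_le_mul_of_nonneg_right (mod_cast card_le_card hS) (by positivity)
  have hinj : Set.InjOn (fun S => ∑ x ∈ S, x) (Y.powerset : Set (Finset (ι → ℤ))) :=
    hY.mono fun S hS => by simpa using hS
  have hr : #(Icc (-r) r) = 2 * #Y * M + 1 := by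
    rw [Int.card_Icc, show r + 1 - -r = ((2 * #Y * M + 1 : ℕ) : ℤ) by push_cast; ring,
      Int.toNat_natCast]
  simpa [hr] using card_le_card_of_injOn _ hbox hinj

theorem le_logb_of_two_rpow_le {N t : ℝ} (hN : 2 ≤ N) (h : (2 : ℝ) ^ (2 * t) ≤ N * t + 1) :
    t ≤ Real.logb 2 N := by
  by_contra! hlt
  have hN2t : N < 2 ^ t := (Real.logb_lt_iff_lt_rpow (by norm_num) (by linarith)).mp hlt
  have ht : 1 ≤ t := by
    have : Real.logb 2 2 ≤ Real.logb 2 N := Real.logb_le_logb_of_le (by norm_num) (by norm_num) hN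
    rw [Real.logb_self_eq_one (by norm_num)] at this
    linarith
  have hbern : 1 + t ≤ 2 ^ t := by
    simpa [mul_one, one_add_one_eq_two] using
      one_add_mul_self_le_rpow_one_add (s := 1) (by norm_num) ht
  -- `4^t = 2^t 2^t > N 2^t ≥ N (1 + t) > N t + 1`
  rw [two_mul, Real.rpow_add (by norm_num)] at h
  nlinarith

theorem card_le_two_mul_logb_of_two_pow_le {k d M : ℕ} (h : 2 ^ k ≤ (2 * k * M + 1) ^ d) :
    (k : ℝ) ≤ 2 * d * Real.logb 2 (4 * d * M) := by
  rcases Nat.eq_zero_or_pos d with rfl | hd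
  · simp_all [← not_lt, Nat.one_lt_two_pow_iff]
  rcases Nat.eq_zero_or_pos M with rfl | hM
  · simp_all [← not_lt, Nat.one_lt_two_pow_iff]
  set t : ℝ := k / (2 * d)
  have hk : (k : ℝ) = 2 * d * t := (mul_div_cancel₀ _ (by positivity)).symm
  have hmain : (2 : ℝ) ^ (2 * t) ≤ 4 * d * M * t + 1 := by
    rw [← pow_le_pow_iff_left₀ (by positivity) (by positivity) hd.ne',
      ← Real.rpow_mul_natCast (by norm_num), mul_right_comm, ← hk, Real.rpow_natCast,
      show 4 * d * M * t + 1 = (2 * k * M + 1 : ℝ) by rw [hk]; ring]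
    exact_mod_cast h
  rw [hk]
  gcongr
  exact le_logb_of_two_rpow_le (by norm_cast; nlinarith) hmain

/-- Eisenbrand–Shmonin, part 2: with `M` bounding the ℓ∞-norms of the vectors in `X`,
any `b ∈ cone_ℕ(X)` lies in the integer cone of a subset of size at most `2d log₂(4dM)`. -/
theorem stmt8 (d : ℕ) (X : Finset (Fin d → ℤ)) (M : ℕ)
    (hM : ∀ x ∈ X, ∀ i, |x i| ≤ (M : ℤ))
    (b : Fin d → ℤ) (lam : (Fin d → ℤ) → ℕ) (hb : b = ∑ x ∈ X, lam x • x) :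
    ∃ Xt ⊆ X, (∃ mu : (Fin d → ℤ) → ℕ, b = ∑ x ∈ Xt, mu x • x) ∧
      (Xt.card : ℝ) ≤ 2 * d * Real.logb 2 (4 * d * M) := by
  obtain ⟨Y, hYX, hbY, hmin⟩ := exists_minimal_subset_mem_natCone (b := b) ⟨lam, hb⟩
  refine ⟨Y, hYX, hbY, card_le_two_mul_logb_of_two_pow_le ?_⟩
  simpa using (addDissociated_of_forall_notMem_natCone_erase hbY hmin).two_pow_card_le
    fun x hx => hM x (hYX hx)
end
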